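/- For any hypothesis class H with finite Littlestone dimension d and any integers k >= 0, the bound ELdim(H, k) <= sup { t : binom(t, <= k+1) <= binom(t, <= d) } holds; in particular if k >= d then ELdim(H, k) <= d. -/

import Mathlib

/-!
If `d ≤ k`, a `(k, m)`-difficult extended mistake tree with `m > d` has only branches of length
`> d`: a branch with at most `k` solid edges has length `≥ m`, and any other one has more than
`k ≥ d` edges. Forgetting the dashed edges, its internal nodes then form a depth-`(d + 1)` tree
shattered by `H`, contradicting `Ldim H = d`. Hence `m ≤ d`, and `m` satisfies the binomial
constraint since both sides equal `2 ^ m`; when `k < d` the constraint holds for every `t`.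
-/

/-- A depth-`t` `X`-valued tree: a family of maps `x_s : {-1,+1}^(s-1) → X`. -/
def XTree (X : Type*) (t : ℕ) := (s : Fin t) → (Fin s.val → ℤ) → X

/-- A sign path: a sequence with entries in `{-1,+1}`. -/
def IsSignPath {t : ℕ} (ε : Fin t → ℤ) : Prop := ∀ s, ε s = 1 ∨ ε s = -1

/-- `S(H, x)`: the set of sign paths realized by some hypothesis `h ∈ H` along the tree `x`,
i.e. `ε_s = h (x_s (ε_1, …, ε_{s-1}))` for all `s`. -/
def realizedPaths {X : Type*} (H : Set (X → ℤ)) {t : ℕ} (x : XTree X t) :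
    Set (Fin t → ℤ) :=
  {ε | IsSignPath ε ∧ ∃ h ∈ H, ∀ s : Fin t,
    ε s = h (x s (fun i => ε ⟨i.val, i.isLt.trans s.isLt⟩))}

/-- The tree shattering coefficient `S(H, t)`: the maximum of `|S(H, x)|` over
all depth-`t` `X`-valued trees `x`. -/
noncomputable def treeShatter {X : Type*} (H : Set (X → ℤ)) (t : ℕ) : ℕ :=
  ⨆ x : XTree X t, (realizedPaths H x).ncard

/-- A depth-`t` tree is shattered by `H` if every sign path is realized by some `h ∈ H`. -/
def Shattered {X : Type*} (H : Set (X → ℤ)) {t : ℕ} (x : XTree X t) : Prop :=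
  ∀ ε : Fin t → ℤ, IsSignPath ε → ε ∈ realizedPaths H x

/-- An extended mistake tree: leaves are labeled by hypotheses, and each internal node
carries an example `a : X`, the label `y ∈ {-1,+1}` of its dashed downward edge
(the dashed edge goes to the child labeled `y`), and the two subtrees
(first the `-1`-child, then the `+1`-child). -/
inductive EMT (X : Type*) where
  | leaf : (X → ℤ) → EMT X
  | node : X → ℤ → EMT X → EMT X → EMT X

/-- Validity of an extended mistake tree for the class `H`: the dashed-edge labels are in
`{-1,+1}` and every leaf is labeled by a hypothesis of `H` consistent with the
root-to-leaf path (and satisfying the accumulated constraint `P`). -/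
def EMT.ValidFrom {X : Type*} (H : Set (X → ℤ)) (P : (X → ℤ) → Prop) : EMT X → Prop
  | .leaf h => h ∈ H ∧ P h
  | .node a y tneg tpos => (y = 1 ∨ y = -1) ∧
      EMT.ValidFrom H (fun h => P h ∧ h a = -1) tneg ∧
      EMT.ValidFrom H (fun h => P h ∧ h a = 1) tpos

/-- The set of pairs `(number of solid edges, length)` of root-to-leaf paths of an
extended mistake tree. An edge to a child is solid iff that child is not the one the
dashed edge points to. -/
def EMT.paths {X : Type*} : EMT X → Set (ℕ × ℕ)
  | .leaf _ => {(0, 0)}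
  | .node _ y tneg tpos =>
      (fun p => (p.1 + (if y = -1 then 0 else 1), p.2 + 1)) '' EMT.paths tneg ∪
      (fun p => (p.1 + (if y = 1 then 0 else 1), p.2 + 1)) '' EMT.paths tpos

/-- A tree is `(k,m)`-difficult iff every root-to-leaf path using at most `k` solid
edges has length at least `m`. -/
def EMT.Difficult {X : Type*} (T : EMT X) (k m : ℕ) : Prop :=
  ∀ p ∈ T.paths, p.1 ≤ k → m ≤ p.2

def XTree.node {X : Type*} {n : ℕ} (a : X) (xneg xpos : XTree X n) : XTree X (n + 1) :=
  fun s => Fin.cases (fun _ => a)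
    (fun s pre => if pre ⟨0, Nat.succ_pos _⟩ = 1
      then xpos s (fun i => pre i.succ) else xneg s (fun i => pre i.succ)) s

section Shattering

variable {X : Type*}

theorem Shattered.mono {H G : Set (X → ℤ)} {t : ℕ} {x : XTree X t} (hx : Shattered H x)
    (hHG : H ⊆ G) : Shattered G x := by
  intro ε hε
  obtain ⟨-, h, hH, hh⟩ := hx ε hε
  exact ⟨hε, h, hHG hH, hh⟩

theorem shattered_nil (H : Set (X → ℤ)) (hH : H.Nonempty) (x : XTree X 0) : Shattered H x := by
  obtain ⟨h, hh⟩ := hH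
  exact fun ε hε => ⟨hε, h, hh, fun s => s.elim0⟩

theorem Shattered.node {H : Set (X → ℤ)} {n : ℕ} {a : X} {xneg xpos : XTree X n}
    (hneg : Shattered {h | h ∈ H ∧ h a = -1} xneg) (hpos : Shattered {h | h ∈ H ∧ h a = 1} xpos) :
    Shattered H (XTree.node a xneg xpos) := by
  intro ε hε
  have htail : IsSignPath (fun i : Fin n => ε i.succ) := fun s => hε s.succ
  -- the first sign selects the subtree, and the hypothesis realizing the tail there labels `a` by it
  obtain ⟨h, ⟨hH, ha⟩, hsub⟩ : ∃ h, (h ∈ H ∧ h a = ε 0) ∧ ∀ s : Fin n,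
      ε s.succ = h ((if ε 0 = 1 then xpos else xneg) s
        (fun i => ε ⟨i.val + 1, Nat.succ_lt_succ (i.isLt.trans s.isLt)⟩)) := by
    rcases hε 0 with h0 | h0
    · obtain ⟨-, h, hh, hpath⟩ := hpos _ htail
      exact ⟨h, h0 ▸ hh, by simpa [h0] using hpath⟩
    · obtain ⟨-, h, hh, hpath⟩ := hneg _ htail
      exact ⟨h, h0 ▸ hh, by simpa [h0] using hpath⟩
  refine ⟨hε, h, hH, Fin.cases ha.symm fun s => ?_⟩
  rw [hsub s]
  simp only [XTree.node, Fin.cases_succ]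
  split_ifs <;> first | rfl | contradiction

end Shattering

namespace EMT

variable {X : Type*} {H : Set (X → ℤ)}

theorem ValidFrom.nonempty {P : (X → ℤ) → Prop} {T : EMT X} (hT : T.ValidFrom H P) :
    {h | h ∈ H ∧ P h}.Nonempty := by
  induction T generalizing P with
  | leaf h => exact ⟨h, hT⟩
  | node a y tneg tpos ihneg _ =>
    obtain ⟨h, hH, hP, -⟩ := ihneg hT.2.1
    exact ⟨h, hH, hP⟩

theorem fst_le_snd_of_mem_paths {T : EMT X} {p : ℕ × ℕ} (hp : p ∈ T.paths) : p.1 ≤ p.2 := by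
  induction T generalizing p with
  | leaf h =>
    rw [paths, Set.mem_singleton_iff] at hp
    simp [hp]
  | node a y tneg tpos ihneg ihpos =>
    rcases hp with ⟨q, hq, rfl⟩ | ⟨q, hq, rfl⟩
    · have := ihneg hq; dsimp only; split <;> omega
    · have := ihpos hq; dsimp only; split <;> omega

theorem ValidFrom.exists_shattered {P : (X → ℤ) → Prop} {T : EMT X} (hT : T.ValidFrom H P)
    {n : ℕ} (hn : ∀ p ∈ T.paths, n ≤ p.2) : ∃ x : XTree X n, Shattered {h | h ∈ H ∧ P h} x := by
  induction T generalizing n P with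
  | leaf h =>
    obtain rfl : n = 0 := Nat.le_zero.mp (hn (0, 0) rfl)
    exact ⟨fun s => s.elim0, shattered_nil _ hT.nonempty _⟩
  | node a y tneg tpos ihneg ihpos =>
    cases n with
    | zero => exact ⟨fun s => s.elim0, shattered_nil _ hT.nonempty _⟩
    | succ n =>
      obtain ⟨xneg, hxneg⟩ := ihneg hT.2.1 fun p hp =>
        Nat.le_of_succ_le_succ (hn _ (Set.mem_union_left _ ⟨p, hp, rfl⟩))
      obtain ⟨xpos, hxpos⟩ := ihpos hT.2.2 fun p hp =>
        Nat.le_of_succ_le_succ (hn _ (Set.mem_union_right _ ⟨p, hp, rfl⟩))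
      refine ⟨XTree.node a xneg xpos, Shattered.node ?_ ?_⟩
      · exact hxneg.mono fun h ⟨hH, hP, ha⟩ => ⟨⟨hH, hP⟩, ha⟩
      · exact hxpos.mono fun h ⟨hH, hP, ha⟩ => ⟨⟨hH, hP⟩, ha⟩

theorem Difficult.min_le_snd {T : EMT X} {k m : ℕ} (hT : T.Difficult k m) {p : ℕ × ℕ}
    (hp : p ∈ T.paths) : min m (k + 1) ≤ p.2 := by
  rcases le_or_gt p.1 k with hk | hk
  · exact (min_le_left _ _).trans (hT p hp hk)
  · exact (min_le_right _ _).trans (hk.trans_le (fst_le_snd_of_mem_paths hp))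

theorem Difficult.le_of_not_shattered {P : (X → ℤ) → Prop} {T : EMT X} {k m d : ℕ}
    (hv : T.ValidFrom H P) (hT : T.Difficult k m) (hdk : d ≤ k)
    (hH : ∀ x : XTree X (d + 1), ¬ Shattered H x) : m ≤ d := by
  by_contra! hdm
  obtain ⟨x, hx⟩ := hv.exists_shattered (n := d + 1) fun p hp =>
    (le_min hdm (Nat.succ_le_succ hdk)).trans (hT.min_le_snd hp)
  exact hH x (hx.mono fun _ h => h.1)

end EMT

theorem sum_range_choose_of_le {n c : ℕ} (h : n ≤ c) :
    ∑ i ∈ Finset.range (c + 1), n.choose i = 2 ^ n := by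
  rw [← Nat.sum_range_choose n]
  refine (Finset.sum_subset (Finset.range_subset_range.mpr (Nat.succ_le_succ h)) ?_).symm
  intro i _ hi
  exact Nat.choose_eq_zero_of_lt (by simpa using hi)

theorem stmt18_general {X : Type*} (H : Set (X → ℤ))
    (d : ℕ)
    (hLdim_ub : ∀ x : XTree X (d + 1), ¬ Shattered H x)
    (k : ℕ) (m : ℕ)
    (hm : ∃ T : EMT X, T.ValidFrom H (fun _ => True) ∧ T.Difficult k m) :
    ((m : ℕ∞) ≤ ⨆ (t : ℕ) (_ : ∑ i ∈ Finset.range (k + 2), t.choose i ≤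
        ∑ i ∈ Finset.range (d + 1), t.choose i), (t : ℕ∞)) ∧
    (d ≤ k → m ≤ d) := by
  obtain ⟨T, hvalid, hdiff⟩ := hm
  have hle : d ≤ k → m ≤ d := fun hdk => hdiff.le_of_not_shattered hvalid hdk hLdim_ub
  refine ⟨?_, hle⟩
  have hm_mem : ∑ i ∈ Finset.range (k + 2), m.choose i ≤ ∑ i ∈ Finset.range (d + 1), m.choose i := by
    rcases le_or_gt d k with hdk | hkd
    · rw [sum_range_choose_of_le (c := k + 1) (by omega), sum_range_choose_of_le (hle hdk)]
    · exact Finset.sum_le_sum_of_subset (Finset.range_subset_range.mpr (by omega))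
  exact le_iSup₂_of_le m hm_mem le_rfl

theorem stmt18 {X : Type*} (H : Set (X → ℤ))
    (hsign : ∀ h ∈ H, ∀ a : X, h a = 1 ∨ h a = -1)
    (d : ℕ)
    (hLdim_lb : ∃ x : XTree X d, Shattered H x)
    (hLdim_ub : ∀ x : XTree X (d + 1), ¬ Shattered H x)
    (k : ℕ) (m : ℕ)
    (hm : ∃ T : EMT X, T.ValidFrom H (fun _ => True) ∧ T.Difficult k m) :
    ((m : ℕ∞) ≤ ⨆ (t : ℕ) (_ : ∑ i ∈ Finset.range (k + 2), t.choose i ≤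
        ∑ i ∈ Finset.range (d + 1), t.choose i), (t : ℕ∞)) ∧
    (d ≤ k → m ≤ d) :=
  stmt18_general H d hLdim_ub k m hm
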